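/- (Theorem 2, combined MLP objective over all diversity images.) The map u ↦ Σ_{m=0}^{L−1} U_m* w_m(u), where w_m(u)_i = (U_m u)_i · (1 − I_{m,i}/(|(U_m u)_i|² + ε²)), is Lipschitz continuous on ℂ^N with Lipschitz constant L + Σ_{m=0}^{L−1} (max_i I_{m,i})/ε², with respect to the Euclidean norm ‖u‖² = Σᵢ |uᵢ|². -/

import Mathlib

/-- The combined MLP complex-gradient map over `L` diversity images:
`u ↦ Σ_m U_m* w_m(u)` with `w_m(u)ᵢ = (U_m u)ᵢ (1 − I_{m,i}/(|(U_m u)ᵢ|²+ε²))`. -/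
noncomputable def mlpGradTotal {N L : ℕ} (U : Fin L → Matrix (Fin N) (Fin N) ℂ)
    (I : Fin L → Fin N → ℝ) (ε : ℝ) (u : EuclideanSpace ℂ (Fin N)) :
    EuclideanSpace ℂ (Fin N) :=
  ∑ m : Fin L,
    WithLp.toLp 2 ((star (U m)).mulVec fun i =>
      (U m).mulVec u i *
        (((1 : ℝ) - I m i / (‖(U m).mulVec u i‖ ^ 2 + ε ^ 2) : ℝ) : ℂ))

/-- The scalar MLP nonlinearity. -/
noncomputable def phiF (c ε : ℝ) (z : ℂ) : ℂ :=
  z * (((1 : ℝ) - c / (‖z‖ ^ 2 + ε ^ 2) : ℝ) : ℂ)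

/-- Scalar Lipschitz estimate for the MLP nonlinearity. -/
lemma phiF_lip {c ε : ℝ} (hc : 0 ≤ c) (hε : 0 < ε) (z w : ℂ) :
    ‖phiF c ε z - phiF c ε w‖ ≤ (1 + c / ε ^ 2) * ‖z - w‖ := by
  set x := ‖z‖ with hxdef
  set y := ‖w‖ with hydef
  set d := ‖z - w‖ with hddef
  have hx : 0 ≤ x := norm_nonneg _
  have hy : 0 ≤ y := norm_nonneg _
  have hd : 0 ≤ d := norm_nonneg _
  have hA0 : 0 < x ^ 2 + ε ^ 2 := by positivity
  have hB0 : 0 < y ^ 2 + ε ^ 2 := by positivity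
  have hzc : ((x : ℂ)) ^ 2 = z * (starRingEnd ℂ) z := by
    rw [hxdef, ← Complex.ofReal_pow, ← Complex.normSq_eq_norm_sq, Complex.mul_conj]
  have hwc : ((y : ℂ)) ^ 2 = w * (starRingEnd ℂ) w := by
    rw [hydef, ← Complex.ofReal_pow, ← Complex.normSq_eq_norm_sq, Complex.mul_conj]
  have hAc : z * (starRingEnd ℂ) z + (ε : ℂ) ^ 2 ≠ 0 := by
    rw [← hzc]
    have : ((x ^ 2 + ε ^ 2 : ℝ) : ℂ) ≠ 0 := Complex.ofReal_ne_zero.mpr hA0.ne'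
    push_cast at this; exact this
  have hBc : w * (starRingEnd ℂ) w + (ε : ℂ) ^ 2 ≠ 0 := by
    rw [← hwc]
    have : ((y ^ 2 + ε ^ 2 : ℝ) : ℂ) ≠ 0 := Complex.ofReal_ne_zero.mpr hB0.ne'
    push_cast at this; exact this
  have key : phiF c ε z - phiF c ε w =
      (z - w) - ((c / ((x ^ 2 + ε ^ 2) * (y ^ 2 + ε ^ 2)) : ℝ) : ℂ) *
        (((ε ^ 2 : ℝ) : ℂ) * (z - w) - z * w * (starRingEnd ℂ) (z - w)) := by
    unfold phiF
    push_cast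
    rw [map_sub, hzc, hwc]
    field_simp
    ring
  have h2 : ‖((ε ^ 2 : ℝ) : ℂ) * (z - w) - z * w * (starRingEnd ℂ) (z - w)‖ ≤
      ε ^ 2 * d + x * y * d := by
    refine (norm_sub_le _ _).trans ?_
    have e1 : ‖((ε ^ 2 : ℝ) : ℂ) * (z - w)‖ = ε ^ 2 * d := by
      rw [norm_mul, Complex.norm_real, Real.norm_eq_abs, _root_.abs_of_nonneg (sq_nonneg ε)]
    have e2 : ‖z * w * (starRingEnd ℂ) (z - w)‖ = x * y * d := by
      rw [norm_mul, norm_mul, Complex.norm_conj]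
    rw [e1, e2]
  have h1 : ‖phiF c ε z - phiF c ε w‖ ≤
      d + (c / ((x ^ 2 + ε ^ 2) * (y ^ 2 + ε ^ 2))) * (ε ^ 2 * d + x * y * d) := by
    rw [key]
    refine (norm_sub_le _ _).trans ?_
    rw [norm_mul, Complex.norm_real, Real.norm_eq_abs,
      _root_.abs_of_nonneg (by positivity : (0:ℝ) ≤ c / ((x ^ 2 + ε ^ 2) * (y ^ 2 + ε ^ 2)))]
    gcongr
  refine h1.trans ?_
  have hkey : c / ((x ^ 2 + ε ^ 2) * (y ^ 2 + ε ^ 2)) * (ε ^ 2 + x * y) ≤ c / ε ^ 2 := by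
    rw [div_mul_eq_mul_div, div_le_div_iff₀ (by positivity) (by positivity)]
    nlinarith [mul_nonneg hc (sq_nonneg (x * y)),
      mul_nonneg hc (mul_nonneg (sq_nonneg ε) (sq_nonneg (x - y))),
      mul_nonneg (mul_nonneg hc (sq_nonneg ε)) (mul_nonneg hx hy)]
  nlinarith [mul_le_mul_of_nonneg_right hkey hd]

open Matrix in
lemma dot_self_eq {N : ℕ} (v : Fin N → ℂ) :
    star v ⬝ᵥ v = ((∑ i, ‖v i‖ ^ 2 : ℝ) : ℂ) := by
  simp only [dotProduct, Pi.star_apply]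
  push_cast
  refine Finset.sum_congr rfl fun i _ => ?_
  rw [← Complex.ofReal_pow, ← Complex.normSq_eq_norm_sq,
    Complex.normSq_eq_conj_mul_self]
  rfl

-- A unitary matrix preserves the Euclidean norm.
open Matrix in
lemma mulVec_norm_eq {N : ℕ} (U : Matrix (Fin N) (Fin N) ℂ) (h : star U * U = 1)
    (x y : EuclideanSpace ℂ (Fin N)) (hy : ∀ i, y i = U.mulVec x i) :
    ‖y‖ = ‖x‖ := by
  have hdot : star (U.mulVec x) ⬝ᵥ U.mulVec x = star x ⬝ᵥ x := by
    rw [Matrix.star_mulVec, Matrix.dotProduct_mulVec, Matrix.vecMul_vecMul,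
      show Uᴴ * U = star U * U from rfl, h, Matrix.vecMul_one]
  rw [dot_self_eq, dot_self_eq] at hdot
  have hsum : (∑ i, ‖U.mulVec x i‖ ^ 2 : ℝ) = ∑ i, ‖x i‖ ^ 2 := by exact_mod_cast hdot
  rw [EuclideanSpace.norm_eq, EuclideanSpace.norm_eq]
  rw [show (∑ i, ‖y i‖ ^ 2 : ℝ) = ∑ i, ‖U.mulVec x i‖ ^ 2 from
    Finset.sum_congr rfl fun i _ => by rw [hy i], hsum]

/-- Componentwise Lipschitz bound implies Euclidean bound. -/
lemma euclidean_norm_le_of_comp {N : ℕ} {K : ℝ} (hK : 0 ≤ K)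
    (a b : EuclideanSpace ℂ (Fin N)) (h : ∀ i, ‖a i‖ ≤ K * ‖b i‖) :
    ‖a‖ ≤ K * ‖b‖ := by
  rw [EuclideanSpace.norm_eq, EuclideanSpace.norm_eq]
  rw [show K * Real.sqrt (∑ i, ‖b i‖ ^ 2) = Real.sqrt (K ^ 2 * ∑ i, ‖b i‖ ^ 2) by
    rw [Real.sqrt_mul (sq_nonneg K), Real.sqrt_sq hK]]
  apply Real.sqrt_le_sqrt
  rw [Finset.mul_sum]
  refine Finset.sum_le_sum fun i _ => ?_
  have := h i
  have hb : 0 ≤ ‖b i‖ := norm_nonneg _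
  nlinarith [norm_nonneg (a i)]

/-- Theorem 2, combined MLP objective over all diversity images:
the combined complex-gradient map is Lipschitz with constant
`L + Σ_m (maxᵢ I_{m,i})/ε²` in the Euclidean norm. -/
theorem mlpGradTotal_lipschitz {N L : ℕ} (hN : 0 < N) (hL : 0 < L)
    (U : Fin L → Matrix (Fin N) (Fin N) ℂ)
    (hU : ∀ m, star (U m) * U m = 1 ∧ U m * star (U m) = 1)
    (I : Fin L → Fin N → ℝ) (hI : ∀ m i, 0 ≤ I m i) (ε : ℝ) (hε : 0 < ε) :
    ∀ u w : EuclideanSpace ℂ (Fin N),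
      ‖mlpGradTotal U I ε u - mlpGradTotal U I ε w‖ ≤
        ((L : ℝ) + ∑ m : Fin L, (⨆ i : Fin N, I m i) / ε ^ 2) * ‖u - w‖ := by
  intro u w
  haveI : Nonempty (Fin N) := ⟨⟨0, hN⟩⟩
  -- the componentwise nonlinearity applied after U m
  set F : Fin L → EuclideanSpace ℂ (Fin N) → EuclideanSpace ℂ (Fin N) :=
    fun m v => WithLp.toLp 2 (fun i => phiF (I m i) ε ((U m).mulVec v i)) with hF
  -- each term of the sum
  set T : Fin L → EuclideanSpace ℂ (Fin N) → EuclideanSpace ℂ (Fin N) :=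
    fun m v => WithLp.toLp 2 (fun i => (star (U m)).mulVec (F m v) i) with hT
  have hTot : ∀ v : EuclideanSpace ℂ (Fin N), mlpGradTotal U I ε v = ∑ m : Fin L, T m v := by
    intro v
    unfold mlpGradTotal
    refine Finset.sum_congr rfl fun m _ => ?_
    rfl
  have hsup_nonneg : ∀ m, 0 ≤ ⨆ i : Fin N, I m i := by
    intro m
    have h0 : I m ⟨0, hN⟩ ≤ ⨆ i : Fin N, I m i :=
      le_ciSup (f := fun i : Fin N => I m i) (Set.Finite.bddAbove (Set.finite_range _)) (⟨0, hN⟩ : Fin N)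
    exact le_trans (hI m ⟨0, hN⟩) h0
  have hterm : ∀ m : Fin L, ‖T m u - T m w‖ ≤ (1 + (⨆ i : Fin N, I m i) / ε ^ 2) * ‖u - w‖ := by
    intro m
    have hK : (0:ℝ) ≤ 1 + (⨆ i : Fin N, I m i) / ε ^ 2 := by
      have h := hsup_nonneg m
      have h2 : 0 ≤ (⨆ i : Fin N, I m i) / ε ^ 2 := div_nonneg h (sq_nonneg ε)
      linarith
    -- difference of images under F
    set a : EuclideanSpace ℂ (Fin N) := F m u - F m w with ha
    -- T m u - T m w = (star (U m)).mulVec a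
    have hTa : ∀ i, (T m u - T m w) i = (star (U m)).mulVec a i := by
      intro i
      show T m u i - T m w i = _
      simp only [hT, ha]
      rw [show (F m u - F m w : EuclideanSpace ℂ (Fin N)) = (F m u) - (F m w) from rfl]
      rw [WithLp.ofLp_sub, Matrix.mulVec_sub]
      rfl
    have hUstar : star (star (U m)) * star (U m) = 1 := by
      rw [star_star]; exact (hU m).2
    have h1 : ‖T m u - T m w‖ = ‖a‖ :=
      mulVec_norm_eq (star (U m)) hUstar a (T m u - T m w) hTa
    -- Uu - Uw as a Euclidean vector
    set b : EuclideanSpace ℂ (Fin N) := WithLp.toLp 2 (fun i => (U m).mulVec (u - w) i) with hb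
    have h2 : ‖b‖ = ‖u - w‖ := mulVec_norm_eq (U m) (hU m).1 (u - w) b fun i => rfl
    have h3 : ‖a‖ ≤ (1 + (⨆ i : Fin N, I m i) / ε ^ 2) * ‖b‖ := by
      refine euclidean_norm_le_of_comp hK a b fun i => ?_
      have hai : a i = phiF (I m i) ε ((U m).mulVec u i) - phiF (I m i) ε ((U m).mulVec w i) :=
        rfl
      have hbi : b i = (U m).mulVec u i - (U m).mulVec w i := by
        simp only [hb]
        rw [Matrix.mulVec_sub]
        rfl
      rw [hai, hbi]
      refine (phiF_lip (hI m i) hε _ _).trans ?_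
      have hle : I m i ≤ ⨆ j : Fin N, I m j :=
        le_ciSup (f := fun j : Fin N => I m j) (Set.Finite.bddAbove (Set.finite_range _)) i
      have : (0:ℝ) ≤ ‖(U m).mulVec u i - (U m).mulVec w i‖ := norm_nonneg _
      gcongr
    calc ‖T m u - T m w‖ = ‖a‖ := h1
      _ ≤ (1 + (⨆ i : Fin N, I m i) / ε ^ 2) * ‖b‖ := h3
      _ = (1 + (⨆ i : Fin N, I m i) / ε ^ 2) * ‖u - w‖ := by rw [h2]
  have hdiff : mlpGradTotal U I ε u - mlpGradTotal U I ε w = ∑ m : Fin L, (T m u - T m w) := by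
    rw [hTot u, hTot w, Finset.sum_sub_distrib]
  calc ‖mlpGradTotal U I ε u - mlpGradTotal U I ε w‖
      = ‖∑ m : Fin L, (T m u - T m w)‖ := by rw [hdiff]
    _ ≤ ∑ m : Fin L, ‖T m u - T m w‖ := norm_sum_le _ _
    _ ≤ ∑ m : Fin L, (1 + (⨆ i : Fin N, I m i) / ε ^ 2) * ‖u - w‖ :=
        Finset.sum_le_sum fun m _ => hterm m
    _ = ((L : ℝ) + ∑ m : Fin L, (⨆ i : Fin N, I m i) / ε ^ 2) * ‖u - w‖ := by
        rw [← Finset.sum_mul]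
        congr 1
        rw [Finset.sum_add_distrib]
        simp
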